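/- arXiv:1603.07826 — 8 statements merged into one kernel-verified Lean document; each statement's English description precedes it below -/
import Mathlib

section
/- (Theorem 1) Let t be a real number with t < 0 and let F(x) = 1/(e^{x(t-1)} - t) for x ∈ ℝ. Then for every N ∈ ℕ and every real x, the N-th derivative of F satisfies (d/dx)^N F(x) = (1-t)^N · Σ_{i=1}^{N+1} a_{i-1}(N,t) · F(x)^i. -/
/-- The coefficients `a i N t` defined by `a 0 N t = 1` and, for `1 ≤ i ≤ N`,
`a i N t = i * t * ∑_{j=0}^{N-i} (i+1)^j * a (i-1) (N-j-1) t`. -/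
noncomputable def eulerianCoeff : ℕ → ℕ → ℝ → ℝ
  | 0, _, _ => 1
  | (i + 1), N, t =>
      ((i : ℝ) + 1) * t *
        ∑ j ∈ Finset.range (N - (i + 1) + 1),
          ((i : ℝ) + 2) ^ j * eulerianCoeff i (N - j - 1) t

/-!
`F` solves the autonomous Riccati equation `F' = (1 - t) (F + t F²)`, so by induction every
derivative of `F` is a polynomial in `F`: if `F⁽ⁿ⁾ = P(F)` then `F⁽ⁿ⁺¹⁾ = (P' Q)(F)` with
`Q = (1 - t)(X + t X²)`. Applying `P ↦ P' Q` to `∑ₖ a_k(N, t) X^{k+1}` gives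
`(1 - t) ∑ₖ a_k(N + 1, t) X^{k+1}`, because peeling off the `j = 0` term of the defining sum
yields the recursion `a_k(N + 1) = (k + 1) a_k(N) + k t a_{k-1}(N)`.
-/

open Polynomial Finset

section AutonomousODE

variable {𝕜 : Type*} [NontriviallyNormedField 𝕜]

theorem iteratedDeriv_eq_eval_iterate {f : 𝕜 → 𝕜} {Q : 𝕜[X]}
    (hf : ∀ x, HasDerivAt f (Q.eval (f x)) x) (n : ℕ) :
    iteratedDeriv n f = fun x => ((fun P => derivative P * Q)^[n] X).eval (f x) := by
  induction n with
  | zero => simp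
  | succ n ih =>
    funext x
    rw [iteratedDeriv_succ, ih, Function.iterate_succ_apply', eval_mul]
    exact ((Polynomial.hasDerivAt _ (f x)).comp x (hf x)).deriv

end AutonomousODE

theorem eulerianCoeff_succ_right {k N : ℕ} (t : ℝ) (hk : k ≤ N) :
    eulerianCoeff k (N + 1) t
      = (k + 1) * eulerianCoeff k N t + k * t * eulerianCoeff (k - 1) N t := by
  cases k with
  | zero => simp [eulerianCoeff]
  | succ k =>
    have hlen : N + 1 - (k + 1) + 1 = N - (k + 1) + 1 + 1 := by omega
    have hidx : ∀ j, N + 1 - (j + 1) - 1 = N - j - 1 := fun j => by omega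
    rw [eulerianCoeff, eulerianCoeff, hlen, sum_range_succ', mul_add, add_comm]
    simp only [hidx, Nat.sub_zero, add_tsub_cancel_right, pow_zero, pow_succ, one_mul,
      Nat.cast_add_one, mul_sum]
    ring_nf

theorem eulerianCoeff_succ_self (N : ℕ) (t : ℝ) :
    eulerianCoeff (N + 1) (N + 1) t = (N + 1) * t * eulerianCoeff N N t := by
  simp [eulerianCoeff]

noncomputable def eulerianPoly (N : ℕ) (t : ℝ) : ℝ[X] :=
  ∑ k ∈ range (N + 1), C (eulerianCoeff k N t) * X ^ (k + 1)

theorem eulerianPoly_succ (N : ℕ) (t : ℝ) :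
    eulerianPoly (N + 1) t = derivative (eulerianPoly N t) * (X + C t * X ^ 2) := by
  refine Polynomial.funext fun y => ?_
  have hshift : ∑ k ∈ range (N + 1), ((k : ℝ) + 1) * t * eulerianCoeff k N t * y ^ (k + 2)
      = ∑ k ∈ range (N + 1), (k : ℝ) * t * eulerianCoeff (k - 1) N t * y ^ (k + 1)
        + (N + 1) * t * eulerianCoeff N N t * y ^ (N + 2) := by
    set f : ℕ → ℝ := fun k => k * t * eulerianCoeff (k - 1) N t * y ^ (k + 1)
    calc _ = ∑ k ∈ range (N + 2), f k := by simp [f, sum_range_succ' f, add_assoc]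
      _ = _ := by simp [f, sum_range_succ f (N + 1)]
  have hrec : ∀ k ∈ range (N + 1), eulerianCoeff k (N + 1) t * y ^ (k + 1)
      = ((k : ℝ) + 1) * eulerianCoeff k N t * y ^ (k + 1)
        + k * t * eulerianCoeff (k - 1) N t * y ^ (k + 1) := fun k hk => by
    rw [eulerianCoeff_succ_right t (mem_range_succ_iff.mp hk)]
    ring
  simp only [eulerianPoly, derivative_sum, derivative_C_mul_X_pow, add_tsub_cancel_right,
    eval_finsetSum, eval_mul, eval_C, eval_pow, eval_X, eval_add]
  calc ∑ k ∈ range (N + 1 + 1), eulerianCoeff k (N + 1) t * y ^ (k + 1)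
      = ∑ k ∈ range (N + 1), ((k : ℝ) + 1) * eulerianCoeff k N t * y ^ (k + 1)
        + (∑ k ∈ range (N + 1), (k : ℝ) * t * eulerianCoeff (k - 1) N t * y ^ (k + 1)
          + (N + 1) * t * eulerianCoeff N N t * y ^ (N + 2)) := by
        rw [sum_range_succ, sum_congr rfl hrec, sum_add_distrib, eulerianCoeff_succ_self]
        ring
    _ = ∑ k ∈ range (N + 1), ((k : ℝ) + 1) * eulerianCoeff k N t * y ^ (k + 1)
        + ∑ k ∈ range (N + 1), ((k : ℝ) + 1) * t * eulerianCoeff k N t * y ^ (k + 2) := by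
        rw [hshift]
    _ = _ := by
        rw [← sum_add_distrib, sum_mul]
        exact sum_congr rfl fun k _ => by push_cast; ring

theorem iterate_derivative_mul_eulerianPoly (N : ℕ) (t : ℝ) :
    (fun P => derivative P * (C (1 - t) * (X + C t * X ^ 2)))^[N] X
      = C ((1 - t) ^ N) * eulerianPoly N t := by
  induction N with
  | zero => simp [eulerianPoly, eulerianCoeff]
  | succ N ih =>
    rw [Function.iterate_succ_apply', ih, derivative_C_mul, eulerianPoly_succ, pow_succ (1 - t),
      C_mul]
    ring

theorem hasDerivAt_one_div_exp_sub {t x : ℝ} (hx : Real.exp (x * (t - 1)) ≠ t) :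
    HasDerivAt (fun y => 1 / (Real.exp (y * (t - 1)) - t))
      ((1 - t) * (1 / (Real.exp (x * (t - 1)) - t)
        + t * (1 / (Real.exp (x * (t - 1)) - t)) ^ 2)) x := by
  have hden : Real.exp (x * (t - 1)) - t ≠ 0 := sub_ne_zero.mpr hx
  have hlin : HasDerivAt (fun y : ℝ => y * (t - 1)) (t - 1) x := by
    simpa using (hasDerivAt_id x).mul_const (t - 1)
  simp only [one_div]
  refine ((hlin.exp.sub_const t).fun_inv hden).congr_deriv ?_
  field_simp
  ring

theorem eulerian_nth_deriv (t : ℝ) (ht : t < 0)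
    (F : ℝ → ℝ) (hF : F = fun x => 1 / (Real.exp (x * (t - 1)) - t)) :
    ∀ (N : ℕ) (x : ℝ), iteratedDeriv N F x =
      (1 - t) ^ N * ∑ i ∈ Finset.Icc 1 (N + 1), eulerianCoeff (i - 1) N t * (F x) ^ i := by
  have hF' : ∀ x, HasDerivAt F ((C (1 - t) * (X + C t * X ^ 2)).eval (F x)) x := fun x => by
    subst hF
    simpa using hasDerivAt_one_div_exp_sub (ne_of_gt ((Real.exp_pos _).trans' ht))
  intro N x
  rw [iteratedDeriv_eq_eval_iterate hF', iterate_derivative_mul_eulerianPoly]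
  simp only [eulerianPoly, eval_mul, eval_C, eval_finsetSum, eval_pow, eval_X]
  rw [range_eq_Ico, ← Ico_add_one_right_eq_Icc]
  simpa using congrArg ((1 - t) ^ N * ·)
    (sum_Ico_add' (fun i => eulerianCoeff (i - 1) N t * F x ^ i) 0 (N + 1) 1)
end

section
/- For every real number t, every N ∈ ℕ, and every integer i with 2 ≤ i ≤ N+1, the coefficients a_i(N,t) satisfy the recurrence a_{i-1}(N+1, t) = (i-1)·t·a_{i-2}(N, t) + i·a_{i-1}(N, t). -/
lemma eulerianCoeff_succ (k N : ℕ) (t : ℝ) :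
    eulerianCoeff (k + 1) N t =
      ((k : ℝ) + 1) * t *
        ∑ j ∈ Finset.range (N - (k + 1) + 1),
          ((k : ℝ) + 2) ^ j * eulerianCoeff k (N - j - 1) t := by
  rw [eulerianCoeff]

theorem eulerianCoeff_recurrence (t : ℝ) (N : ℕ) (i : ℕ) (h2 : 2 ≤ i) (hN : i ≤ N + 1) :
    eulerianCoeff (i - 1) (N + 1) t =
      ((i : ℝ) - 1) * t * eulerianCoeff (i - 2) N t + (i : ℝ) * eulerianCoeff (i - 1) N t := by
  obtain ⟨k, rfl⟩ : ∃ k, i = k + 2 := ⟨i - 2, by omega⟩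
  have hk : k + 1 ≤ N := by omega
  have e1 : k + 2 - 1 = k + 1 := by omega
  have e2 : k + 2 - 2 = k := by omega
  rw [e1, e2, eulerianCoeff_succ, eulerianCoeff_succ]
  have hr1 : N + 1 - (k + 1) + 1 = (N - (k + 1) + 1) + 1 := by omega
  rw [hr1, Finset.sum_range_succ']
  have harg : ∀ j, N + 1 - (j + 1) - 1 = N - j - 1 := by intro j; omega
  have h0 : N + 1 - 0 - 1 = N := by omega
  simp only [harg, h0, pow_succ, pow_zero, one_mul]
  push_cast
  rw [mul_add, Finset.mul_sum, add_comm]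
  congr 1
  · ring
  · rw [Finset.mul_sum, Finset.mul_sum]
    apply Finset.sum_congr rfl
    intro j _
    ring
end

section
/- For every real number t and every integer N ≥ 3, the coefficient a_3(N,t) has the closed form a_3(N, t) = 3!·t^3 · Σ_{j_2=0}^{N-3} Σ_{j_1=0}^{N-j_2-3} 4^{j_2}·3^{j_1}·(2^{N-j_2-j_1-2} - 1). -/
lemma ec1 (t : ℝ) (N : ℕ) (hN : 1 ≤ N) :
    eulerianCoeff 1 N t = t * ((2:ℝ) ^ N - 1) := by
  rw [eulerianCoeff]
  simp only [eulerianCoeff, mul_one, Nat.cast_zero]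
  rw [Nat.sub_add_cancel hN]
  rw [show ((0:ℝ)+2) = 2 by norm_num, geom_sum_eq (by norm_num : (2:ℝ) ≠ 1) N]
  ring

lemma ec2 (t : ℝ) (N : ℕ) (hN : 2 ≤ N) :
    eulerianCoeff 2 N t = 2 * t ^ 2 *
      ∑ j ∈ Finset.range (N - 2 + 1), (3:ℝ) ^ j * ((2:ℝ) ^ (N - j - 1) - 1) := by
  rw [eulerianCoeff]
  rw [Finset.mul_sum, Finset.mul_sum]
  apply Finset.sum_congr rfl
  intro j hj
  simp only [Finset.mem_range, Nat.lt_succ_iff] at hj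
  have h1 : 1 ≤ N - j - 1 := by omega
  rw [ec1 t _ h1]
  push_cast
  ring

lemma ec3 (t : ℝ) (N : ℕ) (hN : 3 ≤ N) :
    eulerianCoeff 3 N t = 6 * t ^ 3 *
      ∑ j₂ ∈ Finset.range (N - 3 + 1), ∑ j₁ ∈ Finset.range (N - j₂ - 3 + 1),
        (4 : ℝ) ^ j₂ * (3 : ℝ) ^ j₁ * ((2 : ℝ) ^ (N - j₂ - j₁ - 2) - 1) := by
  rw [eulerianCoeff]
  rw [Finset.mul_sum, Finset.mul_sum]
  apply Finset.sum_congr rfl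
  intro j₂ hj₂
  simp only [Finset.mem_range, Nat.lt_succ_iff] at hj₂
  have h2 : 2 ≤ N - j₂ - 1 := by omega
  rw [ec2 t _ h2]
  have e1 : N - j₂ - 1 - 2 = N - j₂ - 3 := by omega
  rw [e1]
  simp only [Finset.mul_sum]
  apply Finset.sum_congr rfl
  intro j₁ hj₁
  have e2 : N - j₂ - 1 - j₁ - 1 = N - j₂ - j₁ - 2 := by omega
  rw [e2]
  push_cast
  ring

theorem eulerianCoeff_three (t : ℝ) (N : ℕ) (hN : 3 ≤ N) :
    eulerianCoeff 3 N t =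
      (Nat.factorial 3 : ℝ) * t ^ 3 *
        ∑ j₂ ∈ Finset.range (N - 3 + 1), ∑ j₁ ∈ Finset.range (N - j₂ - 3 + 1),
          (4 : ℝ) ^ j₂ * (3 : ℝ) ^ j₁ * ((2 : ℝ) ^ (N - j₂ - j₁ - 2) - 1) := by
  rw [ec3 t N hN]
  norm_num [Nat.factorial]
end

section
/- For every real number t and all integers 1 ≤ i ≤ N, the coefficient a_i(N,t) has the explicit form a_i(N, t) = i!·t^i · Σ_{j_{i-1}=0}^{N-i} Σ_{j_{i-2}=0}^{N-j_{i-1}-i} ⋯ Σ_{j_1=0}^{N-j_{i-1}-⋯-j_2-i} (i+1)^{j_{i-1}} · i^{j_{i-2}} ⋯ 3^{j_1} · (2^{N-j_{i-1}-j_{i-2}-⋯-j_1-i+1} - 1), where the (i-1)-fold sum is over nonnegative integers j_1, …, j_{i-1} with j_1 + ⋯ + j_{i-1} ≤ N - i. -/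
noncomputable def eulerF : ℕ → ℕ → ℝ
  | 0, M => 2 ^ (M + 1) - 1
  | (n + 1), M => ∑ m ∈ Finset.range (M + 1), ((n : ℝ) + 3) ^ m * eulerF n (M - m)

lemma eulerF_eq (n M : ℕ) :
    eulerF n M = ∑ j ∈ (Fintype.piFinset fun _ : Fin n => Finset.range (M + 1)).filter
        (fun j => ∑ k, j k ≤ M),
      (∏ k : Fin n, ((k : ℕ) + 3 : ℝ) ^ (j k)) * ((2 : ℝ) ^ (M - (∑ k, j k) + 1) - 1) := by
  induction n generalizing M with
  | zero =>
    simp [eulerF]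
  | succ n ih =>
    rw [eulerF]
    simp_rw [ih, Finset.mul_sum]
    rw [Finset.sum_sigma']
    refine Finset.sum_nbij' (i := fun p => Fin.snoc p.2 p.1)
      (j := fun j => ⟨j (Fin.last n), Fin.init j⟩) ?_ ?_ ?_ ?_ ?_
    · rintro ⟨m, j'⟩ hp
      simp only [Finset.mem_sigma, Finset.mem_filter, Fintype.mem_piFinset,
        Finset.mem_range] at hp ⊢
      obtain ⟨hm, hj', hs⟩ := hp
      rw [Fin.sum_univ_castSucc]
      simp only [Fin.snoc_castSucc, Fin.snoc_last]
      refine ⟨fun k => ?_, by omega⟩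
      · induction k using Fin.lastCases with
        | last => simpa using hm
        | cast k => simp only [Fin.snoc_castSucc]; exact lt_of_lt_of_le (hj' k) (by omega)
    · intro j hj
      simp only [Finset.mem_sigma, Finset.mem_filter, Fintype.mem_piFinset,
        Finset.mem_range] at hj ⊢
      obtain ⟨hj', hs⟩ := hj
      rw [Fin.sum_univ_castSucc] at hs
      simp only [Fin.init]
      have hle : ∀ k : Fin n, j k.castSucc ≤ ∑ k : Fin n, j k.castSucc := fun k =>
        Finset.single_le_sum (f := fun k : Fin n => j k.castSucc)
          (fun _ _ => Nat.zero_le _) (Finset.mem_univ k)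
      exact ⟨by omega, fun k => by have := hle k; omega, by omega⟩
    · rintro ⟨m, j'⟩ hp
      simp [Fin.init_snoc]
    · intro j hj
      simp [Fin.snoc_init_self]
    · rintro ⟨m, j'⟩ hp
      simp only [Finset.mem_sigma, Finset.mem_filter, Fintype.mem_piFinset,
        Finset.mem_range] at hp
      obtain ⟨hm, hj', hs⟩ := hp
      rw [Fin.prod_univ_castSucc, Fin.sum_univ_castSucc]
      simp only [Fin.snoc_castSucc, Fin.snoc_last, Fin.coe_castSucc, Fin.val_last]
      rw [show M - (∑ k, j' k + m) = M - m - ∑ k, j' k from by omega]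
      ring
  
lemma eulerianCoeff_eq_F (t : ℝ) (i N : ℕ) (h1 : 1 ≤ i) (hN : i ≤ N) :
    eulerianCoeff i N t = (Nat.factorial i : ℝ) * t ^ i * eulerF (i - 1) (N - i) := by
  induction i generalizing N with
  | zero => omega
  | succ i ih =>
    match i, ih with
    | 0, _ =>
      rw [eulerianCoeff]
      simp only [Nat.cast_zero, zero_add, Nat.sub_self, Nat.factorial_one, Nat.cast_one,
        pow_one, one_mul]
      have hN' : N - 1 + 1 = N := by omega
      rw [hN', eulerF, hN']
      have e0 : ∀ a, eulerianCoeff 0 a t = 1 := fun _ => rfl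
      simp only [e0, mul_one]
      rw [geom_sum_eq (by norm_num : (2:ℝ) ≠ 1)]
      ring
    | n + 1, ih =>
      rw [eulerianCoeff]
      rw [show eulerF (n + 1 + 1 - 1) (N - (n + 1 + 1)) = eulerF (n + 1) (N - (n + 2)) from rfl]
      rw [eulerF, Finset.mul_sum, Finset.mul_sum]
      refine Finset.sum_congr rfl fun m hm => ?_
      simp only [Finset.mem_range] at hm
      rw [ih (N - m - 1) (by omega) (by omega)]
      rw [show N - m - 1 - (n + 1) = N - (n + 2) - m from by omega]
      rw [show eulerF (n + 1 - 1) = eulerF n from rfl]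
      rw [Nat.factorial_succ (n + 1)]
      push_cast
      ring

theorem eulerianCoeff_explicit (t : ℝ) (i N : ℕ) (h1 : 1 ≤ i) (hN : i ≤ N) :
    eulerianCoeff i N t =
      (Nat.factorial i : ℝ) * t ^ i *
        ∑ j ∈ (Fintype.piFinset fun _ : Fin (i - 1) => Finset.range (N - i + 1)).filter
            (fun j => ∑ k, j k ≤ N - i),
          (∏ k : Fin (i - 1), ((k : ℕ) + 3 : ℝ) ^ (j k)) *
            ((2 : ℝ) ^ (N - (∑ k, j k) - i + 1) - 1) := by
  rw [eulerianCoeff_eq_F t i N h1 hN, eulerF_eq]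
  congr 1
  refine Finset.sum_congr rfl fun j hj => ?_
  rw [show N - i - (∑ k, j k) + 1 = N - (∑ k, j k) - i + 1 from by omega]
end

section
/- Let t be a real number with |t| < 1 and let A_n(t) denote the n-th derivative at x = 0 of the function x ↦ (1-t)/(e^{x(t-1)} - t). Then for every n ∈ ℕ, the series Σ_{j=0}^{∞} t^j (j+1)^n converges and equals A_n(t)/(1-t)^{n+1}. -/
/-!
Put `c = 1 - t > 0`. Near `x = 0` we have `|t e^{cx}| < 1`, and the geometric series gives
`(1 - t) / (e^{-cx} - t) = c e^{cx} / (1 - t e^{cx}) = ∑ⱼ c tʲ e^{(j+1)cx}`.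
For `x < r` with `|t| e^{cr} < 1`, the `n`-times differentiated series is dominated by a
multiple of `∑ⱼ (j+1)ⁿ (|t| e^{cr})ʲ`, so it may be differentiated termwise; at `x = 0` this gives
`A n = ∑ⱼ c tʲ ((j+1)c)ⁿ = c^{n+1} ∑ⱼ tʲ (j+1)ⁿ`.
-/

open Real Filter Topology

theorem summable_succ_pow_mul_geometric (n : ℕ) {q : ℝ} (hq : ‖q‖ < 1) :
    Summable fun j : ℕ => ((j : ℝ) + 1) ^ n * q ^ j := by
  simp_rw [add_pow, one_pow, mul_one, Finset.sum_mul]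
  refine summable_sum fun k _ => ?_
  simpa only [mul_right_comm] using
    (summable_pow_mul_geometric_of_norm_lt_one k hq).mul_right (n.choose k : ℝ)

section ExpSeries

variable {a μ : ℕ → ℝ} {r : ℝ}

theorem norm_mul_pow_mul_exp_le (hμ : ∀ j, 0 ≤ μ j) {x : ℝ} (hx : x ≤ r) (n j : ℕ) :
    ‖a j * μ j ^ n * exp (μ j * x)‖ ≤ |a j| * μ j ^ n * exp (μ j * r) := by
  rw [Real.norm_eq_abs, abs_mul, abs_mul, abs_pow, abs_of_nonneg (hμ j), abs_exp]
  have := hμ j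
  gcongr

theorem hasSum_iteratedDeriv_of_hasSum_exp {f : ℝ → ℝ} (hμ : ∀ j, 0 ≤ μ j)
    (hdom : ∀ n, Summable fun j => |a j| * μ j ^ n * exp (μ j * r))
    (hf : ∀ x < r, HasSum (fun j => a j * exp (μ j * x)) (f x)) (n : ℕ) :
    ∀ x < r, HasSum (fun j => a j * μ j ^ n * exp (μ j * x)) (iteratedDeriv n f x) := by
  induction n with
  | zero => simpa only [pow_zero, mul_one, iteratedDeriv_zero] using hf
  | succ n ih =>
    intro x hx
    have hterm : ∀ j y, HasDerivAt (fun z => a j * μ j ^ n * exp (μ j * z))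
        (a j * μ j ^ (n + 1) * exp (μ j * y)) y := fun j y => by
      refine ((((hasDerivAt_id' y).const_mul (μ j)).exp).const_mul (a j * μ j ^ n)).congr_deriv ?_
      ring
    have hderiv : HasDerivAt (fun z => ∑' j, a j * μ j ^ n * exp (μ j * z))
        (∑' j, a j * μ j ^ (n + 1) * exp (μ j * x)) x :=
      hasDerivAt_tsum_of_isPreconnected (hdom (n + 1)) isOpen_Iio isPreconnected_Iio
        (fun j y _ => hterm j y) (fun j y hy => norm_mul_pow_mul_exp_le hμ (le_of_lt hy) _ j)
        hx (ih x hx).summable hx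
    have heq : iteratedDeriv n f =ᶠ[𝓝 x] fun z => ∑' j, a j * μ j ^ n * exp (μ j * z) := by
      filter_upwards [Iio_mem_nhds hx] with y hy using (ih y hy).tsum_eq.symm
    rw [iteratedDeriv_succ, heq.deriv_eq, hderiv.deriv]
    exact (Summable.of_norm_bounded (hdom (n + 1))
      fun j => norm_mul_pow_mul_exp_le hμ hx.le _ j).hasSum

end ExpSeries

theorem exp_natCast_succ_mul (j : ℕ) (y : ℝ) : exp (((j : ℝ) + 1) * y) = exp y * exp y ^ j := by
  rw [← exp_nat_mul, ← exp_add]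
  ring_nf

theorem hasSum_eulerian_genFun {t x : ℝ} (h : |t| * exp ((1 - t) * x) < 1) :
    HasSum (fun j : ℕ => (1 - t) * t ^ j * exp (((j : ℝ) + 1) * (1 - t) * x))
      ((1 - t) / (exp (x * (t - 1)) - t)) := by
  have hq : |t * exp ((1 - t) * x)| < 1 := by rwa [abs_mul, abs_exp]
  have hden : 1 - t * exp ((1 - t) * x) ≠ 0 := by
    linarith [(abs_lt.1 hq).2]
  have hsum : (1 - t) / (exp (x * (t - 1)) - t)
      = (1 - t) * exp ((1 - t) * x) * (1 - t * exp ((1 - t) * x))⁻¹ := by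
    rw [show x * (t - 1) = -((1 - t) * x) by ring, exp_neg]
    field_simp
  rw [hsum]
  refine ((hasSum_geometric_of_abs_lt_one hq).mul_left _).congr_fun fun j => ?_
  rw [mul_assoc _ (1 - t), exp_natCast_succ_mul]
  ring

theorem summable_eulerian_majorant {t r : ℝ} (hr : |t| * exp ((1 - t) * r) < 1) (n : ℕ) :
    Summable fun j : ℕ =>
      |(1 - t) * t ^ j| * (((j : ℝ) + 1) * (1 - t)) ^ n * exp (((j : ℝ) + 1) * (1 - t) * r) := by
  have hq : ‖|t| * exp ((1 - t) * r)‖ < 1 := by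
    rwa [Real.norm_eq_abs, abs_of_nonneg (by positivity)]
  refine ((summable_succ_pow_mul_geometric n hq).mul_left
    (|1 - t| * (1 - t) ^ n * exp ((1 - t) * r))).congr fun j => ?_
  rw [abs_mul, abs_pow, mul_pow ((j : ℝ) + 1), mul_assoc _ (1 - t), exp_natCast_succ_mul]
  ring

theorem eulerian_series (t : ℝ) (ht : |t| < 1)
    (A : ℕ → ℝ)
    (hA : ∀ n, A n = iteratedDeriv n (fun x : ℝ => (1 - t) / (Real.exp (x * (t - 1)) - t)) 0) :
    ∀ n : ℕ, HasSum (fun j : ℕ => t ^ j * ((j : ℝ) + 1) ^ n) (A n / (1 - t) ^ (n + 1)) := by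
  intro n
  have hc : 0 < 1 - t := by linarith [le_abs_self t]
  obtain ⟨r, hr0, hr⟩ : ∃ r > 0, |t| * exp ((1 - t) * r) < 1 := by
    have hev : ∀ᶠ r in 𝓝 0, |t| * exp ((1 - t) * r) < 1 :=
      (by fun_prop : Continuous fun r => |t| * exp ((1 - t) * r)).continuousAt.eventually_lt
        continuousAt_const (by simpa using ht)
    exact (eventually_mem_nhdsWithin.and (hev.filter_mono nhdsWithin_le_nhds)).exists
      (f := 𝓝[>] 0)
  have hderiv := hasSum_iteratedDeriv_of_hasSum_exp (fun j => by positivity)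
    (summable_eulerian_majorant hr)
    (fun x hx => hasSum_eulerian_genFun (hr.trans_le' (by gcongr))) n 0 hr0
  rw [hA n]
  refine (hderiv.div_const ((1 - t) ^ (n + 1))).congr_fun fun j => ?_
  rw [mul_zero, exp_zero, mul_one, mul_pow]
  field_simp
  ring
end

section
/- Let t be a real number with t ≠ 1 and let A_n(t) denote the n-th derivative at x = 0 of the function x ↦ (1-t)/(e^{x(t-1)} - t). Then the Eulerian recurrence holds: for every n ∈ ℕ, Σ_{l=0}^{n} binom(n,l) · A_l(t) · (t-1)^{n-l} - t·A_n(t) equals 1-t if n = 0 and equals 0 if n ≥ 1. -/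
open Finset Filter Topology Real

/- Clearing the denominator, the generating function `F x = (1 - t) / (e^{x(t-1)} - t)` satisfies
`F x · e^{(t-1)x} = (1 - t) + t · F x` near `0`. Differentiating `n` times at `0`, Leibniz's rule
turns the left side into `∑ₗ (n choose l) A_l (t-1)^{n-l}` and the right side into
`[n = 0] (1 - t) + t A_n`. -/

theorem iteratedDeriv_mul_exp_const_mul {f : ℝ → ℝ} {x : ℝ} {n : ℕ} (hf : ContDiffAt ℝ n f x)
    (c : ℝ) :
    iteratedDeriv n (fun y => f y * exp (c * y)) x =
      (∑ l ∈ range (n + 1), (n.choose l : ℝ) * iteratedDeriv l f x * c ^ (n - l)) *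
        exp (c * x) := by
  rw [iteratedDeriv_fun_mul hf (by fun_prop), sum_mul]
  refine sum_congr rfl fun l _ => ?_
  rw [iteratedDeriv_exp_const_mul]
  ring

theorem iteratedDeriv_const_add_const_mul {f : ℝ → ℝ} {x : ℝ} {n : ℕ} (hf : ContDiffAt ℝ n f x)
    (a b : ℝ) :
    iteratedDeriv n (fun y => a + b * f y) x =
      (if n = 0 then a else 0) + b * iteratedDeriv n f x := by
  rw [iteratedDeriv_fun_add contDiffAt_const (contDiffAt_const.mul hf), iteratedDeriv_const,
    iteratedDeriv_const_mul_field]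

theorem eulerian_recurrence (t : ℝ) (ht : t ≠ 1)
    (A : ℕ → ℝ)
    (hA : ∀ n, A n = iteratedDeriv n (fun x : ℝ => (1 - t) / (Real.exp (x * (t - 1)) - t)) 0) :
    ∀ n : ℕ,
      (∑ l ∈ Finset.range (n + 1), (n.choose l : ℝ) * A l * (t - 1) ^ (n - l)) - t * A n =
        if n = 0 then 1 - t else 0 := by
  intro n
  set F : ℝ → ℝ := fun x => (1 - t) / (exp (x * (t - 1)) - t)
  have hden : ∀ᶠ y in 𝓝 (0 : ℝ), exp (y * (t - 1)) - t ≠ 0 := by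
    refine ContinuousAt.eventually_ne (by fun_prop) ?_
    simpa using sub_ne_zero.mpr ht.symm
  have hF : ContDiffAt ℝ n F 0 :=
    contDiffAt_const.div (by fun_prop) hden.self_of_nhds
  have hgen : (fun y => F y * exp ((t - 1) * y)) =ᶠ[𝓝 0] fun y => (1 - t) + t * F y := by
    filter_upwards [hden] with y hy
    simp only [F, mul_comm (t - 1) y]
    field_simp
    ring
  have hderiv := hgen.iteratedDeriv_eq n
  rw [iteratedDeriv_mul_exp_const_mul hF, iteratedDeriv_const_add_const_mul hF, mul_zero,
    exp_zero, mul_one] at hderiv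
  simp only [hA]
  rw [hderiv]
  ring
end

section
/- Let t be a real number with t ≠ 1 and let A_n(t) denote the n-th derivative at x = 0 of the function x ↦ (1-t)/(e^{x(t-1)} - t). Then A_0(t) = 1, and for every integer n ≥ 1, A_n(t) = (1/(t-1)) · Σ_{l=0}^{n-1} binom(n,l) · A_l(t) · (t-1)^{n-l}. -/
/-! The generating function `f x = (1 - t) / g x`, with `g x = e^{x(t-1)} - t`, satisfies
`f * g = 1 - t` near `0`. Differentiating this product `n ≥ 1` times by Leibniz's rule gives `0`,
and since `g 0 = 1 - t` while every derivative of `g` at `0` of order `k ≥ 1` is `(t - 1)^k`, this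
solves for `A n` in terms of the lower `A l`. -/

open Filter Finset Topology

section MulEqConst

variable {𝕜 : Type*} [NontriviallyNormedField 𝕜] {𝔸 : Type*} [NormedRing 𝔸] [NormedAlgebra 𝕜 𝔸]
  {f g : 𝕜 → 𝔸} {x : 𝕜} {c : 𝔸} {n : ℕ}

theorem iteratedDeriv_mul_eq_neg_sum_of_mul_eventuallyEq_const
    (hf : ContDiffAt 𝕜 n f x) (hg : ContDiffAt 𝕜 n g x) (hfg : f * g =ᶠ[𝓝 x] fun _ ↦ c)
    (hn : n ≠ 0) :
    iteratedDeriv n f x * g x =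
      -∑ i ∈ range n, n.choose i * iteratedDeriv i f x * iteratedDeriv (n - i) g x := by
  have hleibniz := iteratedDeriv_mul hf hg
  rw [hfg.iteratedDeriv_eq, iteratedDeriv_const, if_neg hn, sum_range_succ] at hleibniz
  simp only [Nat.choose_self, Nat.cast_one, one_mul, Nat.sub_self, iteratedDeriv_zero] at hleibniz
  exact eq_neg_of_add_eq_zero_right hleibniz.symm

end MulEqConst

theorem iteratedDeriv_succ_exp_mul_sub_const (a c : ℝ) (n : ℕ) :
    iteratedDeriv (n + 1) (fun x ↦ Real.exp (x * a) - c) 0 = a ^ (n + 1) := by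
  simp_rw [mul_comm _ a]
  rw [iteratedDeriv_fun_sub (by fun_prop) contDiffAt_const, iteratedDeriv_const,
    iteratedDeriv_exp_const_mul]
  simp

theorem eulerian_recurrence_solved (t : ℝ) (ht : t ≠ 1)
    (A : ℕ → ℝ)
    (hA : ∀ n, A n = iteratedDeriv n (fun x : ℝ => (1 - t) / (Real.exp (x * (t - 1)) - t)) 0) :
    A 0 = 1 ∧ ∀ n : ℕ, 1 ≤ n →
      A n = (1 / (t - 1)) * ∑ l ∈ Finset.range n, (n.choose l : ℝ) * A l * (t - 1) ^ (n - l) := by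
  set g : ℝ → ℝ := fun x ↦ Real.exp (x * (t - 1)) - t
  have hA' : ∀ n, A n = iteratedDeriv n (fun x ↦ (1 - t) / g x) 0 := hA
  have hg0 : g 0 = 1 - t := by simp [g]
  have hg0_ne : g 0 ≠ 0 := hg0 ▸ sub_ne_zero.mpr ht.symm
  have hg : ContDiff ℝ ⊤ g := by fun_prop
  have hf : ContDiffAt ℝ ⊤ (fun x ↦ (1 - t) / g x) 0 :=
    contDiffAt_const.div hg.contDiffAt hg0_ne
  have hfg : (fun x ↦ (1 - t) / g x) * g =ᶠ[𝓝 0] fun _ ↦ 1 - t := by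
    filter_upwards [hg.continuous.continuousAt.eventually_ne hg0_ne] with x hx
    exact div_mul_cancel₀ _ hx
  refine ⟨by rw [hA', iteratedDeriv_zero, ← hg0]; exact div_self hg0_ne, fun n hn ↦ ?_⟩
  have hgn : ∀ i ∈ range n, iteratedDeriv (n - i) g 0 = (t - 1) ^ (n - i) := fun i hi ↦ by
    obtain ⟨m, hm⟩ : ∃ m, n - i = m + 1 := ⟨n - i - 1, by rw [mem_range] at hi; omega⟩
    rw [hm]
    exact iteratedDeriv_succ_exp_mul_sub_const _ _ _
  have key := iteratedDeriv_mul_eq_neg_sum_of_mul_eventuallyEq_const (n := n)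
    (hf.of_le le_top) (hg.contDiffAt.of_le le_top) hfg (by omega)
  rw [sum_congr rfl fun i hi ↦ by rw [hgn i hi], hg0] at key
  simp only [← hA'] at key
  rw [one_div, eq_inv_mul_iff_mul_eq₀ (sub_ne_zero.mpr ht)]
  linear_combination -key
end

section
/- Let t be a real number with t < 0 and let F(x) = 1/(e^{x(t-1)} - t) for x ∈ ℝ. Suppose that for some N ∈ ℕ and real coefficients b_0, b_1, …, b_N the identity (d/dx)^N F(x) = (1-t)^N · Σ_{i=1}^{N+1} b_{i-1} · F(x)^i holds for all real x. Then the (N+1)-st derivative of F satisfies, for all real x, (d/dx)^{N+1} F(x) = (1-t)^{N+1} · [ b_0·F(x) + (N+1)·t·b_N·F(x)^{N+2} + Σ_{i=2}^{N+1} ( i·b_{i-1} + (i-1)·t·b_{i-2} )·F(x)^i ]. -/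
/-!
`F` solves the Riccati equation `F' = (1 - t) (F + t F²)`. Hence, by the chain rule, the
derivative of a polynomial `∑ b (i-1) F^i` is again a polynomial in `F`: each term `F^i`
contributes `i b (i-1)` to `F^i` (from `F`) and `i t b (i-1)` to `F^(i+1)` (from `t F²`).
-/

open Finset Real

lemma sum_mul_pow_riccati (t u : ℝ) (b : ℕ → ℝ) (N : ℕ) :
    ∑ i ∈ Icc 1 (N + 1), b (i - 1) * ((i : ℝ) * u ^ (i - 1) * (u + t * u ^ 2)) =
      b 0 * u + ((N : ℝ) + 1) * t * b N * u ^ (N + 2) +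
        ∑ i ∈ Icc 2 (N + 1), ((i : ℝ) * b (i - 1) + ((i : ℝ) - 1) * t * b (i - 2)) * u ^ i := by
  induction N with
  | zero =>
    simp only [zero_add, Icc_self, sum_singleton, Icc_eq_empty_of_lt one_lt_two, sum_empty]
    push_cast
    ring
  | succ n ih =>
    rw [sum_Icc_succ_top (by omega : 1 ≤ n + 1 + 1),
      sum_Icc_succ_top (by omega : 2 ≤ n + 1 + 1), ih]
    simp only [Nat.add_sub_cancel, show n + 1 + 1 - 2 = n from rfl]
    push_cast
    ring

lemma HasDerivAt.sum_mul_pow_of_riccati {F : ℝ → ℝ} {a t y : ℝ}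
    (hF : HasDerivAt F (a * (F y + t * F y ^ 2)) y) (b : ℕ → ℝ) (N : ℕ) :
    HasDerivAt (fun x => ∑ i ∈ Icc 1 (N + 1), b (i - 1) * F x ^ i)
      (a * (b 0 * F y + ((N : ℝ) + 1) * t * b N * F y ^ (N + 2) +
        ∑ i ∈ Icc 2 (N + 1),
          ((i : ℝ) * b (i - 1) + ((i : ℝ) - 1) * t * b (i - 2)) * F y ^ i)) y := by
  rw [← sum_mul_pow_riccati, mul_sum]
  refine HasDerivAt.fun_sum fun i _ => ?_
  exact ((hF.fun_pow i).const_mul (b (i - 1))).congr_deriv (by ring)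

lemma exp_mul_sub_pos {t : ℝ} (ht : t < 0) (x : ℝ) : 0 < exp (x * (t - 1)) - t := by
  linarith [exp_pos (x * (t - 1))]

lemma hasDerivAt_one_div_exp_mul_sub {t y : ℝ} (hy : exp (y * (t - 1)) - t ≠ 0) :
    HasDerivAt (fun x => 1 / (exp (x * (t - 1)) - t))
      ((1 - t) * (1 / (exp (y * (t - 1)) - t) + t * (1 / (exp (y * (t - 1)) - t)) ^ 2)) y := by
  have hg : HasDerivAt (fun x => exp (x * (t - 1)) - t) (exp (y * (t - 1)) * (t - 1)) y := by
    simpa using (((hasDerivAt_id y).mul_const (t - 1)).exp).sub_const t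
  simp only [one_div]
  refine (hg.fun_inv hy).congr_deriv ?_
  field_simp
  ring

theorem eulerian_deriv_step (t : ℝ) (ht : t < 0)
    (F : ℝ → ℝ) (hF : F = fun x => 1 / (Real.exp (x * (t - 1)) - t))
    (N : ℕ) (b : ℕ → ℝ)
    (h : ∀ x : ℝ, iteratedDeriv N F x =
      (1 - t) ^ N * ∑ i ∈ Finset.Icc 1 (N + 1), b (i - 1) * (F x) ^ i) :
    ∀ x : ℝ, iteratedDeriv (N + 1) F x =
      (1 - t) ^ (N + 1) *
        (b 0 * F x + ((N : ℝ) + 1) * t * b N * (F x) ^ (N + 2) +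
          ∑ i ∈ Finset.Icc 2 (N + 1),
            ((i : ℝ) * b (i - 1) + ((i : ℝ) - 1) * t * b (i - 2)) * (F x) ^ i) := by
  intro x
  have hF' : HasDerivAt F ((1 - t) * (F x + t * F x ^ 2)) x := by
    subst hF
    exact hasDerivAt_one_div_exp_mul_sub (exp_mul_sub_pos ht x).ne'
  rw [iteratedDeriv_succ, funext h,
    ((hF'.sum_mul_pow_of_riccati b N).const_mul ((1 - t) ^ N)).deriv]
  ring
end
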